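/- For every real z > 0, the full heat trace of the flat Heisenberg sub-Laplacian, Z(z) = Σ_{(p,q) ∈ ℤ²} e^{-2π(p²+q²) z} + Σ_{m=1}^∞ m / sinh(m z), converges and satisfies z² Z(z) → π²/4 as z → 0⁺, consistently with the Weyl law N(λ) ∼ (π²/8) λ² via the Abelian relation Z(z) ∼ Γ(3)·(π²/8)/z² = 2·(π²/8)/z². -/

import Mathlib

open Real Filter Topology

/-- The full heat trace of the flat Heisenberg sub-Laplacian: the torus part
`Σ_{(p,q)∈ℤ²} e^{-2π(p²+q²)z}` plus the sub-elliptic part `Σ_{m≥1} m / sinh(mz)`. -/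
noncomputable def heisenbergHeatTrace (z : ℝ) : ℝ :=
  (∑' p : ℤ × ℤ, Real.exp (-(2 * π * ((p.1 : ℝ) ^ 2 + (p.2 : ℝ) ^ 2)) * z)) +
  ∑' m : ℕ, ((m : ℝ) + 1) / Real.sinh (((m : ℝ) + 1) * z)

lemma hasSum_inv_sinh {t : ℝ} (ht : 0 < t) :
    HasSum (fun k : ℕ => 2 * Real.exp (-((2 * (k : ℝ) + 1) * t))) (1 / Real.sinh t) := by
  have hr0 : (0:ℝ) ≤ Real.exp (-(2*t)) := (Real.exp_pos _).le
  have hr1 : Real.exp (-(2*t)) < 1 := Real.exp_lt_one_iff.2 (by linarith)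
  have h := (hasSum_geometric_of_lt_one hr0 hr1).mul_left (2 * Real.exp (-t))
  convert h using 1
  · rfl
  · funext k
    rw [← Real.exp_nat_mul, mul_assoc, ← Real.exp_add]
    ring_nf
  · rw [Real.sinh_eq]
    have h1 : Real.exp t - Real.exp (-t) > 0 := by
      have := Real.exp_lt_exp.2 (show -t < t by linarith); linarith
    have h2 : (1:ℝ) - Real.exp (-(2*t)) > 0 := by linarith
    have he : Real.exp (-(2*t)) = Real.exp (-t) * Real.exp (-t) := by
      rw [← Real.exp_add]; ring_nf
    have het : Real.exp t * Real.exp (-t) = 1 := by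
      rw [← Real.exp_add]; simp
    field_simp
    have he' : Real.exp (-(t*2)) = Real.exp (-t) * Real.exp (-t) := by
      rw [← Real.exp_add]; ring_nf
    rw [he', eq_div_iff (by rw [← he]; exact h2.ne')]
    linear_combination (-1 : ℝ) * het

lemma summable_succ_mul_geom {x : ℝ} (h0 : 0 ≤ x) (h1 : x < 1) :
    Summable (fun m : ℕ => ((m : ℝ) + 1) * x ^ (m + 1)) := by
  have h := summable_pow_mul_geometric_of_norm_lt_one (R := ℝ) 1 (by rwa [Real.norm_eq_abs, abs_of_nonneg h0])
  have := h.comp_injective Nat.succ_injective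
  refine this.congr fun m => ?_
  simp [Function.comp, Nat.succ_eq_add_one, pow_one]

lemma hasSum_succ_mul_geom {x : ℝ} (h0 : 0 ≤ x) (h1 : x < 1) :
    HasSum (fun m : ℕ => ((m : ℝ) + 1) * x ^ (m + 1)) (x / (1 - x) ^ 2) := by
  have hs := summable_succ_mul_geom h0 h1
  refine (Summable.hasSum_iff hs).2 ?_
  have hx : ‖x‖ < 1 := by rwa [Real.norm_eq_abs, abs_of_nonneg h0]
  have h := tsum_coe_mul_geometric_of_norm_lt_one hx
  have hsum : Summable (fun n : ℕ => (n : ℝ) * x ^ n) := by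
    simpa [pow_one] using summable_pow_mul_geometric_of_norm_lt_one (R := ℝ) 1 hx
  rw [Summable.tsum_eq_zero_add hsum] at h
  simp only [Nat.cast_zero, zero_mul, pow_zero, zero_add] at h
  rw [← h]
  exact tsum_congr fun m => by push_cast; ring

lemma sinh_sum_repr {z : ℝ} (hz : 0 < z) :
    Summable (fun m : ℕ => ((m : ℝ) + 1) / Real.sinh (((m : ℝ) + 1) * z)) ∧
    HasSum (fun k : ℕ =>
        2 * Real.exp (-((2 * (k : ℝ) + 1) * z)) / (1 - Real.exp (-((2 * (k : ℝ) + 1) * z))) ^ 2)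
      (∑' m : ℕ, ((m : ℝ) + 1) / Real.sinh (((m : ℝ) + 1) * z)) := by
  set F : ℕ × ℕ → ℝ := fun p =>
    2 * ((p.1 : ℝ) + 1) * Real.exp (-(((p.1 : ℝ) + 1) * (2 * (p.2 : ℝ) + 1) * z)) with hF
  have hFnonneg : ∀ p, 0 ≤ F p := fun p => by positivity
  have htpos : ∀ m : ℕ, 0 < ((m : ℝ) + 1) * z := fun m =>
    mul_pos (by positivity) hz
  have hFm : ∀ m : ℕ, HasSum (fun k => F (m, k))
      (((m : ℝ) + 1) / Real.sinh (((m : ℝ) + 1) * z)) := by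
    intro m
    have h := (hasSum_inv_sinh (htpos m)).mul_left ((m : ℝ) + 1)
    have h' : ((m : ℝ) + 1) * (1 / Real.sinh (((m : ℝ) + 1) * z))
        = ((m : ℝ) + 1) / Real.sinh (((m : ℝ) + 1) * z) := by ring
    rw [h'] at h
    refine h.congr_fun fun k => ?_
    have harg : -((2 * (k : ℝ) + 1) * (((m : ℝ) + 1) * z))
        = -(((m : ℝ) + 1) * (2 * (k : ℝ) + 1) * z) := by ring
    show 2 * ((m : ℝ) + 1) * Real.exp (-(((m : ℝ) + 1) * (2 * (k : ℝ) + 1) * z)) = _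
    rw [harg]; ring
  -- summability of the sinh sum, by comparison with a geometric series
  have hden : (0:ℝ) < 1 - Real.exp (-(2 * z)) := by
    have : Real.exp (-(2*z)) < 1 := Real.exp_lt_one_iff.2 (by linarith)
    linarith
  have hS : Summable (fun m : ℕ => ((m : ℝ) + 1) / Real.sinh (((m : ℝ) + 1) * z)) := by
    have hgeom : Summable (fun m : ℕ =>
        (2 / (1 - Real.exp (-(2 * z)))) * (((m : ℝ) + 1) * Real.exp (-z) ^ (m + 1))) :=
      (summable_succ_mul_geom (Real.exp_pos _).le
        (Real.exp_lt_one_iff.2 (by linarith))).mul_left _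
    refine Summable.of_nonneg_of_le (fun m => ?_) (fun m => ?_) hgeom
    · have := Real.sinh_pos_iff.2 (htpos m)
      positivity
    · set t := ((m : ℝ) + 1) * z with htdef
      have ht : 0 < t := htpos m
      have hzt : z ≤ t := by
        rw [htdef]; nlinarith [Nat.cast_nonneg (α := ℝ) m]
      have hlow : Real.exp t * (1 - Real.exp (-(2 * z))) / 2 ≤ Real.sinh t := by
        rw [Real.sinh_eq]
        have h1 : Real.exp (-t) = Real.exp t * Real.exp (-(2*t)) := by
          rw [← Real.exp_add]; ring_nf
        have h2 : Real.exp (-(2*t)) ≤ Real.exp (-(2*z)) := by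
          apply Real.exp_le_exp.2; linarith
        nlinarith [Real.exp_pos t]
      have hlowpos : 0 < Real.exp t * (1 - Real.exp (-(2 * z))) / 2 := by positivity
      have hdiv : ((m : ℝ) + 1) / Real.sinh t
          ≤ ((m : ℝ) + 1) / (Real.exp t * (1 - Real.exp (-(2 * z))) / 2) :=
        div_le_div_of_nonneg_left (by positivity) hlowpos hlow
      refine hdiv.trans (le_of_eq ?_)
      have hexp : Real.exp (-z) ^ (m + 1) = Real.exp (-t) := by
        rw [← Real.exp_nat_mul, htdef]; push_cast; ring_nf
      have hinv : Real.exp t * Real.exp (-t) = 1 := by rw [← Real.exp_add]; simp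
      rw [hexp]
      field_simp
      linear_combination (-1 : ℝ) * hinv
  have hsummF : Summable F := by
    refine (summable_prod_of_nonneg hFnonneg).2 ⟨fun m => (hFm m).summable, ?_⟩
    refine hS.congr fun m => ?_
    exact ((hFm m).tsum_eq).symm
  have hA : HasSum F (∑' p, F p) := hsummF.hasSum
  have h1 : HasSum (fun m : ℕ => ((m : ℝ) + 1) / Real.sinh (((m : ℝ) + 1) * z)) (∑' p, F p) :=
    hA.prod_fiberwise hFm
  have hFk : ∀ k : ℕ, HasSum (fun m => F (m, k))
      (2 * Real.exp (-((2 * (k : ℝ) + 1) * z)) / (1 - Real.exp (-((2 * (k : ℝ) + 1) * z))) ^ 2) := by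
    intro k
    set y := Real.exp (-((2 * (k : ℝ) + 1) * z)) with hy
    have hy0 : 0 ≤ y := (Real.exp_pos _).le
    have hy1 : y < 1 := Real.exp_lt_one_iff.2 (neg_lt_zero.2 (by positivity))
    have h := (hasSum_succ_mul_geom hy0 hy1).mul_left 2
    rw [← mul_div_assoc] at h
    refine h.congr_fun fun m => ?_
    show 2 * ((m : ℝ) + 1) * Real.exp (-(((m : ℝ) + 1) * (2 * (k : ℝ) + 1) * z))
        = 2 * (((m : ℝ) + 1) * y ^ (m + 1))
    rw [hy, ← Real.exp_nat_mul]
    have harg : ((m + 1 : ℕ) : ℝ) * -((2 * (k : ℝ) + 1) * z)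
        = -(((m : ℝ) + 1) * (2 * (k : ℝ) + 1) * z) := by push_cast; ring
    rw [harg]; ring
  have hswap : HasSum (F ∘ Prod.swap) (∑' p, F p) := by
    have := ((Equiv.prodComm ℕ ℕ).hasSum_iff (f := F) (a := ∑' p, F p)).2 hA
    exact this
  have h2 : HasSum (fun k : ℕ =>
      2 * Real.exp (-((2 * (k : ℝ) + 1) * z)) / (1 - Real.exp (-((2 * (k : ℝ) + 1) * z))) ^ 2)
      (∑' p, F p) := by
    refine hswap.prod_fiberwise fun k => ?_
    exact (hFk k).congr_fun fun m => rfl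
  exact ⟨hS, h1.tsum_eq ▸ h2⟩

lemma hasSum_odd_sq_inv : HasSum (fun k : ℕ => 1 / (2 * (k : ℝ) + 1) ^ 2) (π ^ 2 / 8) := by
  have htot := hasSum_zeta_two
  have he : HasSum (fun k : ℕ => (1 : ℝ) / ((2 * k : ℕ) : ℝ) ^ 2) (π ^ 2 / 24) := by
    have := htot.mul_left (1 / 4)
    have h4 : (1 / 4) * (π ^ 2 / 6) = π ^ 2 / 24 := by ring
    rw [h4] at this
    refine this.congr_fun fun k => ?_
    push_cast
    rw [mul_pow, div_mul_div_comm]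
    norm_num
  have hinj : Function.Injective (fun k : ℕ => 2 * k + 1) := by
    intro a b h
    simp only at h
    omega
  have hos : Summable (fun k : ℕ => (1 : ℝ) / ((2 * k + 1 : ℕ) : ℝ) ^ 2) :=
    htot.summable.comp_injective hinj
  have ho : HasSum (fun k : ℕ => (1 : ℝ) / ((2 * k + 1 : ℕ) : ℝ) ^ 2)
      (∑' k : ℕ, (1 : ℝ) / ((2 * k + 1 : ℕ) : ℝ) ^ 2) := hos.hasSum
  have hsum := HasSum.even_add_odd (f := fun n : ℕ => (1:ℝ) / (n:ℝ) ^ 2) he ho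
  have huniq := hsum.unique htot
  have hval : (∑' k : ℕ, (1 : ℝ) / ((2 * k + 1 : ℕ) : ℝ) ^ 2) = π ^ 2 / 8 := by linarith
  rw [hval] at ho
  refine ho.congr_fun fun k => ?_
  push_cast
  ring

lemma tendsto_term {c : ℝ} (hc : 0 < c) :
    Tendsto (fun z : ℝ => z ^ 2 * (2 * Real.exp (-(c * z)) / (1 - Real.exp (-(c * z))) ^ 2))
      (𝓝[>] (0:ℝ)) (𝓝 (2 / c ^ 2)) := by
  have hd : HasDerivAt (fun z : ℝ => 1 - Real.exp (-(c * z))) c 0 := by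
    have h1 : HasDerivAt (fun z : ℝ => -(c * z)) (-c) 0 := by
      simpa [Pi.neg_def] using ((hasDerivAt_id (0:ℝ)).const_mul c).neg
    have h2 := h1.exp
    simpa using h2.const_sub 1
  have hslope := hasDerivAt_iff_tendsto_slope.1 hd
  have hsub : (𝓝[>] (0:ℝ)) ≤ 𝓝[≠] (0:ℝ) :=
    nhdsWithin_mono _ fun x hx => ne_of_gt hx
  have htend1 : Tendsto (fun z : ℝ => (1 - Real.exp (-(c * z))) / z) (𝓝[>] (0:ℝ)) (𝓝 c) := by
    refine Tendsto.congr (fun z => ?_) (hslope.mono_left hsub)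
    simp [slope_def_field, div_eq_div_iff]
  have hinv : Tendsto (fun z : ℝ => z / (1 - Real.exp (-(c * z)))) (𝓝[>] (0:ℝ)) (𝓝 c⁻¹) := by
    have := htend1.inv₀ (ne_of_gt hc)
    refine Tendsto.congr (fun z => ?_) this
    rw [inv_div]
  have hy : Tendsto (fun z : ℝ => Real.exp (-(c * z))) (𝓝[>] (0:ℝ)) (𝓝 1) := by
    have : Continuous fun z : ℝ => Real.exp (-(c * z)) := by continuity
    have h0 := this.tendsto 0
    simp only [mul_zero, neg_zero, Real.exp_zero] at h0
    exact h0.mono_left nhdsWithin_le_nhds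
  have hmain := (((hinv.pow 2).mul hy).const_mul 2)
  have hval : 2 * ((c⁻¹) ^ 2 * 1) = 2 / c ^ 2 := by
    field_simp
  rw [hval] at hmain
  refine Tendsto.congr (fun z => ?_) hmain
  rw [div_pow]
  ring

lemma term_bound {c z : ℝ} (hc : 0 < c) (hz : 0 < z) :
    z ^ 2 * (2 * Real.exp (-(c * z)) / (1 - Real.exp (-(c * z))) ^ 2) ≤ 8 / c ^ 2 := by
  set t := c * z with htdef
  have ht : 0 < t := mul_pos hc hz
  set E := Real.exp (-t) with hEdef
  have hE : 0 < E := Real.exp_pos _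
  have hE1 : E < 1 := Real.exp_lt_one_iff.2 (by linarith)
  have h1t : (0:ℝ) < 1 + t := by linarith
  -- 1 - E ≥ t / (1 + t)
  have hexp : 1 + t ≤ Real.exp t := by linarith [Real.add_one_le_exp t]
  have hEle : E ≤ 1 / (1 + t) := by
    rw [hEdef, Real.exp_neg, one_div]
    exact inv_anti₀ h1t hexp
  have h1 : t / (1 + t) ≤ 1 - E := by
    have : 1 - 1 / (1 + t) = t / (1 + t) := by field_simp; ring
    linarith [hEle, this]
  have h1' : t ≤ (1 - E) * (1 + t) := (div_le_iff₀ h1t).1 h1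
  -- E * (1 + t)^2 ≤ 4
  have hhalf : 1 + t / 2 ≤ Real.exp (t / 2) := by linarith [Real.add_one_le_exp (t / 2)]
  have hq : E * (1 + t) ^ 2 ≤ 4 := by
    have hsq : (1 + t) ^ 2 ≤ 4 * Real.exp t := by
      have h2 : (1 + t) ≤ 2 * Real.exp (t / 2) := by linarith
      have h3 : (1 + t) ^ 2 ≤ (2 * Real.exp (t / 2)) ^ 2 :=
        pow_le_pow_left₀ (by linarith) h2 2
      have h4 : (2 * Real.exp (t / 2)) ^ 2 = 4 * Real.exp t := by
        rw [mul_pow, ← Real.exp_nat_mul]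
        norm_num
        ring
      linarith
    have hEt : E * Real.exp t = 1 := by rw [hEdef, ← Real.exp_add]; simp
    nlinarith
  have hsq' : t ^ 2 ≤ ((1 - E) * (1 + t)) ^ 2 := pow_le_pow_left₀ ht.le h1' 2
  have hgoal : t ^ 2 * E ≤ 4 * (1 - E) ^ 2 := by
    nlinarith [mul_le_mul_of_nonneg_right hsq' hE.le,
      mul_le_mul_of_nonneg_left hq (sq_nonneg (1 - E))]
  have hDpos : (0:ℝ) < (1 - E) ^ 2 := pow_pos (by linarith) 2
  have heq : z ^ 2 * (2 * E / (1 - E) ^ 2) = (2 * z ^ 2 * E) / (1 - E) ^ 2 := by ring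
  rw [heq, div_le_div_iff₀ hDpos (by positivity : (0:ℝ) < c ^ 2)]
  have : t ^ 2 = c ^ 2 * z ^ 2 := by rw [htdef]; ring
  nlinarith [hgoal]

lemma sinh_part_tendsto :
    Tendsto (fun z : ℝ => z ^ 2 * ∑' m : ℕ, ((m : ℝ) + 1) / Real.sinh (((m : ℝ) + 1) * z))
      (𝓝[>] (0:ℝ)) (𝓝 (π ^ 2 / 4)) := by
  have hcpos : ∀ k : ℕ, (0:ℝ) < 2 * (k : ℝ) + 1 := fun k => by positivity
  have hbound_sum : Summable (fun k : ℕ => 8 / (2 * (k : ℝ) + 1) ^ 2) := by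
    refine (hasSum_odd_sq_inv.summable.mul_left 8).congr fun k => ?_
    rw [mul_one_div]
  have hab : ∀ k : ℕ, Tendsto (fun z : ℝ =>
      z ^ 2 * (2 * Real.exp (-((2 * (k : ℝ) + 1) * z)) /
        (1 - Real.exp (-((2 * (k : ℝ) + 1) * z))) ^ 2)) (𝓝[>] (0:ℝ))
      (𝓝 (2 / (2 * (k : ℝ) + 1) ^ 2)) := fun k => tendsto_term (hcpos k)
  have h_bound : ∀ᶠ z : ℝ in 𝓝[>] (0:ℝ), ∀ k : ℕ,
      ‖z ^ 2 * (2 * Real.exp (-((2 * (k : ℝ) + 1) * z)) /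
        (1 - Real.exp (-((2 * (k : ℝ) + 1) * z))) ^ 2)‖ ≤ 8 / (2 * (k : ℝ) + 1) ^ 2 := by
    filter_upwards [self_mem_nhdsWithin] with z hz k
    have hz' : (0:ℝ) < z := hz
    have hE1 : Real.exp (-((2 * (k : ℝ) + 1) * z)) < 1 :=
      Real.exp_lt_one_iff.2 (neg_lt_zero.2 (mul_pos (hcpos k) hz'))
    have hnn : 0 ≤ z ^ 2 * (2 * Real.exp (-((2 * (k : ℝ) + 1) * z)) /
        (1 - Real.exp (-((2 * (k : ℝ) + 1) * z))) ^ 2) := by positivity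
    rw [Real.norm_eq_abs, abs_of_nonneg hnn]
    exact term_bound (hcpos k) hz'
  have hdom := tendsto_tsum_of_dominated_convergence (f := fun (z : ℝ) (k : ℕ) =>
      z ^ 2 * (2 * Real.exp (-((2 * (k : ℝ) + 1) * z)) /
        (1 - Real.exp (-((2 * (k : ℝ) + 1) * z))) ^ 2))
    (g := fun k : ℕ => 2 / (2 * (k : ℝ) + 1) ^ 2) hbound_sum hab h_bound
  have hgsum : (∑' k : ℕ, 2 / (2 * (k : ℝ) + 1) ^ 2) = π ^ 2 / 4 := by
    have h := hasSum_odd_sq_inv.mul_left 2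
    have : (2 : ℝ) * (π ^ 2 / 8) = π ^ 2 / 4 := by ring
    rw [this] at h
    refine HasSum.tsum_eq ?_
    exact h.congr_fun fun k => by rw [mul_one_div]
  rw [hgsum] at hdom
  refine Tendsto.congr' ?_ hdom
  filter_upwards [self_mem_nhdsWithin] with z hz
  have hz' : (0:ℝ) < z := hz
  have hrep := (sinh_sum_repr hz').2
  rw [← hrep.tsum_eq, ← tsum_mul_left]

lemma summable_exp_neg_sq_nat {a : ℝ} (ha : 0 < a) :
    Summable (fun n : ℕ => Real.exp (-(a * (n : ℝ) ^ 2))) := by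
  refine Summable.of_nonneg_of_le (fun n => (Real.exp_pos _).le) (fun n => ?_)
    (summable_geometric_of_lt_one (Real.exp_pos (-a)).le
      (Real.exp_lt_one_iff.2 (by linarith)))
  rw [← Real.exp_nat_mul]
  apply Real.exp_le_exp.2
  have hn : (n : ℝ) ≤ (n : ℝ) ^ 2 := by
    have h := Nat.le_self_pow (two_ne_zero) n
    exact_mod_cast h
  nlinarith
lemma summable_exp_neg_sq_int {a : ℝ} (ha : 0 < a) :
    Summable (fun p : ℤ => Real.exp (-(a * (p : ℝ) ^ 2))) := by
  refine Summable.of_nat_of_neg_add_one ?_ ?_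
  · exact (summable_exp_neg_sq_nat ha).congr fun n => by norm_num
  · refine ((summable_exp_neg_sq_nat ha).comp_injective Nat.succ_injective).congr fun n => ?_
    have : ((-(↑n + 1) : ℤ) : ℝ) ^ 2 = ((n : ℝ) + 1) ^ 2 := by push_cast; ring
    simp only [Function.comp, this, Nat.succ_eq_add_one]
    push_cast
    ring_nf

lemma exp_tail_bound {A : ℝ} (hA : 0 < A) :
    (∑' n : ℕ, Real.exp (-(A * ((n : ℝ) + 1) ^ 2))) ≤ 3 / (2 * Real.sqrt A) := by
  set x := 2 * Real.sqrt A with hxdef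
  have hsA : 0 < Real.sqrt A := Real.sqrt_pos.2 hA
  have hx : 0 < x := by positivity
  set q := Real.exp (-x) with hqdef
  have hq0 : 0 < q := Real.exp_pos _
  have hq1 : q < 1 := Real.exp_lt_one_iff.2 (by linarith)
  -- termwise bound
  have hterm : ∀ n : ℕ, Real.exp (-(A * ((n : ℝ) + 1) ^ 2)) ≤ Real.exp 1 * q ^ (n + 1) := by
    intro n
    rw [hqdef, ← Real.exp_nat_mul, ← Real.exp_add]
    apply Real.exp_le_exp.2
    have hsq : (Real.sqrt A * ((n : ℝ) + 1) - 1) ^ 2 ≥ 0 := sq_nonneg _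
    have hAsq : Real.sqrt A ^ 2 = A := Real.sq_sqrt hA.le
    push_cast
    nlinarith [hsq, hAsq]
  have hgeom : Summable (fun n : ℕ => Real.exp 1 * q ^ (n + 1)) := by
    apply Summable.mul_left
    exact ((summable_geometric_of_lt_one hq0.le hq1).comp_injective Nat.succ_injective).congr
      fun n => by simp [Function.comp]
  have hsum1 : (∑' n : ℕ, Real.exp (-(A * ((n : ℝ) + 1) ^ 2)))
      ≤ ∑' n : ℕ, Real.exp 1 * q ^ (n + 1) := by
    refine Summable.tsum_le_tsum hterm ?_ hgeom
    exact Summable.of_nonneg_of_le (fun n => (Real.exp_pos _).le) hterm hgeom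
  have hsum2 : (∑' n : ℕ, Real.exp 1 * q ^ (n + 1)) = Real.exp 1 * (q / (1 - q)) := by
    rw [tsum_mul_left]
    congr 1
    have h := tsum_geometric_of_lt_one hq0.le hq1
    have hs : Summable (fun n : ℕ => q ^ n) := summable_geometric_of_lt_one hq0.le hq1
    rw [Summable.tsum_eq_zero_add hs] at h
    simp only [pow_zero] at h
    have : (∑' n : ℕ, q ^ (n + 1)) = (1 - q)⁻¹ - 1 := by linarith
    rw [this]
    have hne : (1:ℝ) - q ≠ 0 := by linarith
    field_simp
    ring
  -- q/(1-q) ≤ 1/x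
  have hqle : q ≤ 1 / (1 + x) := by
    rw [hqdef, Real.exp_neg, one_div]
    exact inv_anti₀ (by linarith) (by linarith [Real.add_one_le_exp x])
  have h1q : x / (1 + x) ≤ 1 - q := by
    have : 1 - 1 / (1 + x) = x / (1 + x) := by field_simp; ring
    linarith
  have hfrac : q / (1 - q) ≤ 1 / x := by
    have h1qpos : 0 < 1 - q := by linarith
    rw [div_le_div_iff₀ h1qpos hx]
    have h1 : q * (1 + x) ≤ 1 := by
      have := mul_le_mul_of_nonneg_right hqle (by positivity : (0:ℝ) ≤ 1 + x)
      rwa [one_div, inv_mul_cancel₀ (by positivity : (1:ℝ) + x ≠ 0)] at this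
    nlinarith
  have hexp1 : Real.exp 1 ≤ 3 := by
    have := Real.exp_one_lt_d9
    linarith
  calc (∑' n : ℕ, Real.exp (-(A * ((n : ℝ) + 1) ^ 2)))
      ≤ Real.exp 1 * (q / (1 - q)) := by rw [← hsum2]; exact hsum1
    _ ≤ 3 * (1 / x) := by
        exact mul_le_mul hexp1 hfrac (div_nonneg hq0.le (by linarith)) (by norm_num)
    _ = 3 / (2 * Real.sqrt A) := by rw [hxdef]; ring

set_option maxHeartbeats 1000000 in
lemma theta_bound {z : ℝ} (hz : 0 < z) :
    (∑' p : ℤ, Real.exp (-(2 * π * (p : ℝ) ^ 2) * z)) ≤ 1 + 2 / Real.sqrt z := by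
  have hA : 0 < 2 * π * z := by positivity
  have harg : ∀ x : ℝ, -(2 * π * x ^ 2) * z = -(2 * π * z * x ^ 2) := fun x => by ring
  have hsz : 0 < Real.sqrt z := Real.sqrt_pos.2 hz
  -- √(2πz) ≥ 2√z
  have hsqrtA : 2 * Real.sqrt z ≤ Real.sqrt (2 * π * z) := by
    have h4 : 4 * z ≤ 2 * π * z := by nlinarith [Real.pi_gt_three]
    calc 2 * Real.sqrt z = Real.sqrt (4 * z) := by
          rw [show (4:ℝ) * z = (2:ℝ)^2 * z by ring, Real.sqrt_mul (by positivity),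
            Real.sqrt_sq (by norm_num : (0:ℝ) ≤ 2)]
      _ ≤ Real.sqrt (2 * π * z) := Real.sqrt_le_sqrt h4
  have htail : (∑' n : ℕ, Real.exp (-(2 * π * z * ((n : ℝ) + 1) ^ 2))) ≤ 1 / Real.sqrt z := by
    refine (exp_tail_bound hA).trans ?_
    rw [div_le_div_iff₀ (by positivity) hsz]
    have h1 : Real.sqrt z * 3 ≤ (2 * Real.sqrt (2 * π * z)) * 1 := by
      have : 3 * Real.sqrt z ≤ 4 * Real.sqrt z := by linarith
      nlinarith [hsqrtA, hsz]
    linarith [h1]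
  have hs1 : Summable (fun n : ℕ => Real.exp (-(2 * π * (((n:ℤ)) : ℝ) ^ 2) * z)) := by
    refine (summable_exp_neg_sq_nat hA).congr fun n => ?_
    rw [harg]
    norm_num
  have hs2 : Summable (fun n : ℕ => Real.exp (-(2 * π * (((-(n+1):ℤ)) : ℝ) ^ 2) * z)) := by
    refine ((summable_exp_neg_sq_nat hA).comp_injective Nat.succ_injective).congr fun n => ?_
    rw [harg]
    simp only [Function.comp, Nat.succ_eq_add_one]
    push_cast
    ring_nf
  rw [tsum_of_nat_of_neg_add_one (f := fun p : ℤ => Real.exp (-(2 * π * (p : ℝ) ^ 2) * z)) hs1 hs2]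
  have hnat : (∑' n : ℕ, Real.exp (-(2 * π * ((n:ℤ) : ℝ) ^ 2) * z))
      ≤ 1 + 1 / Real.sqrt z := by
    rw [Summable.tsum_eq_zero_add hs1]
    have h0 : Real.exp (-(2 * π * ((((0:ℕ):ℤ)) : ℝ) ^ 2) * z) = 1 := by norm_num
    have htail' : (∑' n : ℕ, Real.exp (-(2 * π * ((((n+1:ℕ):ℤ)) : ℝ) ^ 2) * z))
        ≤ 1 / Real.sqrt z := by
      refine le_of_eq_of_le (tsum_congr fun n => ?_) htail
      rw [harg]
      congr 1
      push_cast
      ring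
    rw [h0]
    exact add_le_add_right htail' 1
  have hneg : (∑' n : ℕ, Real.exp (-(2 * π * ((-(n+1):ℤ) : ℝ) ^ 2) * z))
      ≤ 1 / Real.sqrt z := by
    refine le_of_eq_of_le (tsum_congr fun n => ?_) htail
    rw [harg]
    congr 1
    push_cast
    ring
  have : 1 + 1 / Real.sqrt z + 1 / Real.sqrt z = 1 + 2 / Real.sqrt z := by ring
  linarith [hnat, hneg]

lemma torus_term_eq {z : ℝ} (p : ℤ × ℤ) :
    Real.exp (-(2 * π * ((p.1 : ℝ) ^ 2 + (p.2 : ℝ) ^ 2)) * z)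
      = Real.exp (-(2 * π * ((p.1 : ℝ)) ^ 2) * z) * Real.exp (-(2 * π * ((p.2 : ℝ)) ^ 2) * z) := by
  rw [← Real.exp_add]
  congr 1
  ring

lemma summable_torus {z : ℝ} (hz : 0 < z) :
    Summable (fun p : ℤ × ℤ => Real.exp (-(2 * π * ((p.1 : ℝ) ^ 2 + (p.2 : ℝ) ^ 2)) * z)) := by
  have hA : 0 < 2 * π * z := by positivity
  have hsum : Summable (fun q : ℤ => Real.exp (-(2 * π * ((q : ℝ)) ^ 2) * z)) := by
    refine (summable_exp_neg_sq_int hA).congr fun q => ?_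
    congr 1
    ring
  have h := Summable.mul_of_nonneg hsum hsum
    (fun q => (Real.exp_pos _).le) (fun q => (Real.exp_pos _).le)
  refine h.congr fun p => ?_
  exact (torus_term_eq p).symm

set_option maxHeartbeats 1600000 in
lemma torus_sq {z : ℝ} (hz : 0 < z) :
    (∑' p : ℤ × ℤ, Real.exp (-(2 * π * ((p.1 : ℝ) ^ 2 + (p.2 : ℝ) ^ 2)) * z))
      = (∑' q : ℤ, Real.exp (-(2 * π * ((q : ℝ)) ^ 2) * z)) ^ 2 := by
  have hA : 0 < 2 * π * z := by positivity
  have hsum : Summable (fun q : ℤ => Real.exp (-(2 * π * ((q : ℝ)) ^ 2) * z)) := by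
    refine (summable_exp_neg_sq_int hA).congr fun q => ?_
    congr 1
    ring
  have hprod := summable_torus hz
  calc (∑' p : ℤ × ℤ, Real.exp (-(2 * π * ((p.1 : ℝ) ^ 2 + (p.2 : ℝ) ^ 2)) * z))
      = ∑' p : ℤ × ℤ, Real.exp (-(2 * π * ((p.1 : ℝ)) ^ 2) * z)
          * Real.exp (-(2 * π * ((p.2 : ℝ)) ^ 2) * z) := tsum_congr torus_term_eq
    _ = ∑' (a : ℤ), ∑' (b : ℤ), Real.exp (-(2 * π * ((a : ℝ)) ^ 2) * z)
          * Real.exp (-(2 * π * ((b : ℝ)) ^ 2) * z) := by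
        refine Summable.tsum_prod' (f := fun p : ℤ × ℤ => Real.exp (-(2 * π * ((p.1 : ℝ)) ^ 2) * z)
            * Real.exp (-(2 * π * ((p.2 : ℝ)) ^ 2) * z))
          (hprod.congr fun p => torus_term_eq p) fun a => ?_
        exact (hsum.mul_left (Real.exp (-(2 * π * ((a : ℝ)) ^ 2) * z))).congr fun b => by
          simp only []
    _ = ∑' (a : ℤ), Real.exp (-(2 * π * ((a : ℝ)) ^ 2) * z)
          * ∑' (b : ℤ), Real.exp (-(2 * π * ((b : ℝ)) ^ 2) * z) := by
        refine tsum_congr fun a => ?_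
        exact tsum_mul_left
    _ = (∑' q : ℤ, Real.exp (-(2 * π * ((q : ℝ)) ^ 2) * z)) ^ 2 := by
        rw [tsum_mul_right, sq]

lemma torus_tendsto :
    Tendsto (fun z : ℝ => z ^ 2 *
        ∑' p : ℤ × ℤ, Real.exp (-(2 * π * ((p.1 : ℝ) ^ 2 + (p.2 : ℝ) ^ 2)) * z))
      (𝓝[>] (0:ℝ)) (𝓝 0) := by
  have hg : Tendsto (fun z : ℝ => (z + 2 * Real.sqrt z) ^ 2) (𝓝[>] (0:ℝ)) (𝓝 0) := by
    have hc : Continuous fun z : ℝ => (z + 2 * Real.sqrt z) ^ 2 :=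
      (continuous_id.add (continuous_const.mul Real.continuous_sqrt)).pow 2
    have h0 := hc.tendsto 0
    simp only [Real.sqrt_zero, mul_zero, add_zero, id_eq, zero_add] at h0
    norm_num at h0
    exact h0.mono_left nhdsWithin_le_nhds
  refine tendsto_of_tendsto_of_tendsto_of_le_of_le' tendsto_const_nhds hg ?_ ?_
  · filter_upwards [self_mem_nhdsWithin] with z hz
    have hz' : (0:ℝ) < z := hz
    have : 0 ≤ ∑' p : ℤ × ℤ, Real.exp (-(2 * π * ((p.1 : ℝ) ^ 2 + (p.2 : ℝ) ^ 2)) * z) :=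
      tsum_nonneg fun p => (Real.exp_pos _).le
    positivity
  · filter_upwards [self_mem_nhdsWithin] with z hz
    have hz' : (0:ℝ) < z := hz
    have hsz : 0 < Real.sqrt z := Real.sqrt_pos.2 hz'
    rw [torus_sq hz']
    have hθnn : 0 ≤ ∑' q : ℤ, Real.exp (-(2 * π * ((q : ℝ)) ^ 2) * z) :=
      tsum_nonneg fun q => (Real.exp_pos _).le
    have hθ := theta_bound hz'
    have hzθ : z * (∑' q : ℤ, Real.exp (-(2 * π * ((q : ℝ)) ^ 2) * z)) ≤ z + 2 * Real.sqrt z := by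
      have h1 : z * (∑' q : ℤ, Real.exp (-(2 * π * ((q : ℝ)) ^ 2) * z))
          ≤ z * (1 + 2 / Real.sqrt z) := by
        exact mul_le_mul_of_nonneg_left hθ hz'.le
      have h2 : z * (1 + 2 / Real.sqrt z) = z + 2 * (z / Real.sqrt z) := by ring
      rw [Real.div_sqrt] at h2
      linarith
    have key : z ^ 2 * (∑' q : ℤ, Real.exp (-(2 * π * ((q : ℝ)) ^ 2) * z)) ^ 2
        = (z * ∑' q : ℤ, Real.exp (-(2 * π * ((q : ℝ)) ^ 2) * z)) ^ 2 := by ring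
    rw [key]
    have hnn : 0 ≤ z * ∑' q : ℤ, Real.exp (-(2 * π * ((q : ℝ)) ^ 2) * z) := by positivity
    exact pow_le_pow_left₀ hnn hzθ 2

/-- For `z > 0` both parts of the Heisenberg heat trace converge, and
`z² Z(z) → π²/4` as `z → 0⁺`, i.e. `Z(z) ∼ 2 (π²/8)/z²`, consistently with the Weyl law
`N(λ) ∼ (π²/8) λ²`. -/
theorem heisenberg_full_heat_trace_asymptotics :
    (∀ z : ℝ, 0 < z →
      Summable (fun p : ℤ × ℤ => Real.exp (-(2 * π * ((p.1 : ℝ) ^ 2 + (p.2 : ℝ) ^ 2)) * z)) ∧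
      Summable (fun m : ℕ => ((m : ℝ) + 1) / Real.sinh (((m : ℝ) + 1) * z))) ∧
    Tendsto (fun z : ℝ => z ^ 2 * heisenbergHeatTrace z) (𝓝[>] 0) (𝓝 (π ^ 2 / 4)) := by
  constructor
  · intro z hz
    exact ⟨summable_torus hz, (sinh_sum_repr hz).1⟩
  · have h := torus_tendsto.add sinh_part_tendsto
    rw [zero_add] at h
    refine Tendsto.congr (fun z => ?_) h
    unfold heisenbergHeatTrace
    ring
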